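/- Let A be a unital Banach algebra in which the invertible elements are dense (topological stable rank one), and λ : A → A a unital algebra homomorphism with ‖λ(a)‖ ≤ ‖a‖. Consider the A-A bimodule structure on A given by a ▷ ξ ◁ b = λ(a)ξb, and assume A is algebraically finitely generated in this bimodule structure on each side. Then the set of ξ ∈ A with λ(A)·ξ·A = A (finite sums) is dense and open in A, and its complement is closed with empty interior (hence meager). -/
import Mathlib


open Finset

/-- If `A` is a unital Banach algebra with dense invertibles (topological stable rank one)
and `λ : A → A` is a contractive unital algebra endomorphism such that the bimodule
`a ▷ ξ ◁ b = λ(a)ξb` on `A` is algebraically finitely generated on each side, then the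
set of single algebraic `A`-`A` generators is dense and open, and its complement is
closed with empty interior (hence meager). -/
theorem generators_dense_open_meager_complement
    {A : Type*} [NormedRing A] [CompleteSpace A] [NormOneClass A]
    (hdense : Dense {x : A | IsUnit x})
    (lam : A →+* A) (hcontr : ∀ a : A, ‖lam a‖ ≤ ‖a‖)
    (hleft : ∃ (p : ℕ) (v : Fin p → A),
      ∀ m : A, ∃ c : Fin p → A, m = ∑ i, lam (c i) * v i)
    (hright : ∃ (q : ℕ) (w : Fin q → A),
      ∀ m : A, ∃ c : Fin q → A, m = ∑ i, w i * c i) :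
    Dense {ξ : A | ∀ m : A, ∃ (k : ℕ) (a b : Fin k → A),
        m = ∑ j, lam (a j) * ξ * b j} ∧
    IsOpen {ξ : A | ∀ m : A, ∃ (k : ℕ) (a b : Fin k → A),
        m = ∑ j, lam (a j) * ξ * b j} ∧
    IsClosed {ξ : A | ∀ m : A, ∃ (k : ℕ) (a b : Fin k → A),
        m = ∑ j, lam (a j) * ξ * b j}ᶜ ∧
    interior {ξ : A | ∀ m : A, ∃ (k : ℕ) (a b : Fin k → A),
        m = ∑ j, lam (a j) * ξ * b j}ᶜ = ∅ := by

  have hsub : {x : A | IsUnit x} ⊆ {ξ : A | ∀ m : A, ∃ (k : ℕ) (a b : Fin k → A),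
      m = ∑ j, lam (a j) * ξ * b j} := by
    rintro ξ ⟨u, rfl⟩ m
    exact ⟨1, fun _ => 1, fun _ => ↑u⁻¹ * m, by
      simp [Units.mul_inv_cancel_left]⟩
  have hGeq : {ξ : A | ∀ m : A, ∃ (k : ℕ) (a b : Fin k → A),
      m = ∑ j, lam (a j) * ξ * b j} =
      {ξ : A | ∃ (k : ℕ) (a b : Fin k → A), IsUnit (∑ j, lam (a j) * ξ * b j)} := by
    ext ξ
    constructor
    · intro h
      obtain ⟨k, a, b, h1⟩ := h 1
      exact ⟨k, a, b, h1 ▸ isUnit_one⟩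
    · rintro ⟨k, a, b, u, hu⟩ m
      refine ⟨k, a, fun j => b j * (↑u⁻¹ * m), ?_⟩
      calc m = ↑u * (↑u⁻¹ * m) := (Units.mul_inv_cancel_left u m).symm
        _ = (∑ j, lam (a j) * ξ * b j) * (↑u⁻¹ * m) := by rw [hu]
        _ = ∑ j, lam (a j) * ξ * (b j * (↑u⁻¹ * m)) := by
              rw [Finset.sum_mul]; simp [mul_assoc]
  have hopen : IsOpen {ξ : A | ∀ m : A, ∃ (k : ℕ) (a b : Fin k → A),
      m = ∑ j, lam (a j) * ξ * b j} := by
    rw [hGeq]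
    have : {ξ : A | ∃ (k : ℕ) (a b : Fin k → A), IsUnit (∑ j, lam (a j) * ξ * b j)} =
        ⋃ (k : ℕ) (a : Fin k → A) (b : Fin k → A),
          (fun ξ : A => ∑ j, lam (a j) * ξ * b j) ⁻¹' {x : A | IsUnit x} := by
      ext ξ; simp [Set.mem_iUnion]
    rw [this]
    refine isOpen_iUnion fun k => isOpen_iUnion fun a => isOpen_iUnion fun b => ?_
    have hcont : Continuous (fun ξ : A => ∑ j, lam (a j) * ξ * b j) := by
      refine continuous_finset_sum _ fun j _ => ?_
      exact ((continuous_const.mul continuous_id).mul continuous_const)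
    exact Units.isOpen.preimage hcont
  have hd : Dense {ξ : A | ∀ m : A, ∃ (k : ℕ) (a b : Fin k → A),
      m = ∑ j, lam (a j) * ξ * b j} := hdense.mono hsub
  exact ⟨hd, hopen, hopen.isClosed_compl, by
    rw [interior_compl, hd.closure_eq, Set.compl_univ]⟩
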